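/- arXiv:1008.3242 — 4 statements merged into one kernel-verified Lean document; each statement's English description precedes it below -/
import Mathlib

section
/- For every integer d ≥ 2 there exist edge-coloured graphs G with minimum colour degree δ^c(G) = d in which every properly coloured path has length at most 2d and every properly coloured cycle has length at most d. (Such a graph is obtained by taking p ≥ d pairwise vertex-disjoint rainbow copies H_1, …, H_p of the complete graph K_d, adding a new vertex x, and joining x to every vertex of H_j by an edge of a new colour c_j, for each j.) -/
open SimpleGraph

open SimpleGraph

/-- A walk is properly coloured if consecutive edges receive distinct colours. -/
def IsProperWalk {V C : Type*} {G : SimpleGraph V} (c : Sym2 V → C) {u v : V}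
    (w : G.Walk u v) : Prop :=
  List.Chain' (· ≠ ·) (w.edges.map c)

/-- A closed walk is properly coloured as a cycle if consecutive edges, including the
wrap-around pair of last and first edge, receive distinct colours. -/
def IsProperCycleWalk {V C : Type*} {G : SimpleGraph V} (c : Sym2 V → C) {u : V}
    (w : G.Walk u u) : Prop :=
  List.Chain' (· ≠ ·) (w.edges.map c ++ (w.edges.map c).take 1)

/-- The colour degree of a vertex: the number of distinct colours on incident edges. -/
noncomputable def colorDegree {V C : Type*} (G : SimpleGraph V) (c : Sym2 V → C) (v : V) : ℕ :=
  {col : C | ∃ w, G.Adj v w ∧ c s(v, w) = col}.ncard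

/-- The minimum colour degree of an edge-coloured graph. -/
noncomputable def minColorDegree {V C : Type*} (G : SimpleGraph V) (c : Sym2 V → C) : ℕ :=
  sInf (Set.range (colorDegree G c))

/-! Join a new vertex `x` to `p ≥ d` disjoint copies of `K_d`, the edges from `x` to the `j`-th
copy all getting colour `j`. Deleting `x` leaves components of `d` vertices, so a path has at
most `d` edges on each side of `x`. A cycle through `x` returns to `x` from the copy it left
into, hence through an edge of the same colour, so it is not properly coloured; a cycle avoiding
`x` stays in one copy and has length at most `d`. -/

variable {V W ι C : Type*} {G : SimpleGraph V} {G' : SimpleGraph W}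

lemma SimpleGraph.Walk.IsPath.length_add_one_le_encard {u v : V} {p : G.Walk u v}
    (hp : p.IsPath) {s : Set V} (hs : ∀ x ∈ p.support, x ∈ s) :
    (p.length + 1 : ℕ∞) ≤ s.encard := by
  classical
  have hcard : p.support.toFinset.card = p.length + 1 := by
    rw [List.toFinset_card_of_nodup hp.support_nodup, Walk.length_support]
  calc (p.length + 1 : ℕ∞) = (p.support.toFinset : Set V).encard := by
        rw [Set.encard_coe_eq_coe_finsetCard, hcard]; push_cast; rfl
    _ ≤ s.encard := Set.encard_le_encard fun x hx => hs x (by simpa using hx)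

lemma List.IsChain.rel_getLast_head {α : Type*} {R : α → α → Prop} {l : List α}
    (h : List.IsChain R (l ++ l.take 1)) {x y : α} (hx : x ∈ l.getLast?) (hy : y ∈ l.head?) :
    R x y :=
  (List.isChain_append.mp h).2.2 x hx y (by cases l <;> simp_all)

lemma List.isChain_append_take_one_iff_cycle_chain {α : Type*} {R : α → α → Prop}
    (l : List α) :
    List.IsChain R (l ++ l.take 1) ↔ Cycle.Chain R (l : Cycle α) := by
  cases l with
  | nil => simp
  | cons a l => rw [Cycle.chain_coe_cons]; simp

section

lemma isProperWalk_map_iff (f : G →g G') (c : Sym2 W → C) {u v : V} (w : G.Walk u v) :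
    IsProperWalk c (w.map f) ↔ IsProperWalk (c ∘ Sym2.map f) w := by
  rw [IsProperWalk, IsProperWalk, Walk.edges_map, List.map_map]

lemma isProperCycleWalk_map_iff (f : G →g G') (c : Sym2 W → C) {u : V} (w : G.Walk u u) :
    IsProperCycleWalk c (w.map f) ↔ IsProperCycleWalk (c ∘ Sym2.map f) w := by
  rw [IsProperCycleWalk, IsProperCycleWalk, Walk.edges_map, List.map_map]

lemma isProperCycleWalk_iff_cycleChain (c : Sym2 V → C) {u : V} (w : G.Walk u u) :
    IsProperCycleWalk c w ↔ Cycle.Chain (· ≠ ·) (w.edges.map c : Cycle C) :=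
  List.isChain_append_take_one_iff_cycle_chain _

lemma IsProperCycleWalk.rotate [DecidableEq V] {c : Sym2 V → C} {u v : V} {w : G.Walk u u}
    (hw : IsProperCycleWalk c w) (h : v ∈ w.support) : IsProperCycleWalk c (w.rotate v h) := by
  rw [isProperCycleWalk_iff_cycleChain] at hw ⊢
  rwa [Cycle.coe_eq_coe.mpr ((w.rotate_edges v h).map c)]

def ProperPathsLengthLE (G : SimpleGraph V) (c : Sym2 V → C) (L : ℕ) : Prop :=
  ∀ (x y : V) (w : G.Walk x y), w.IsPath → IsProperWalk c w → w.length ≤ L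

def ProperCyclesLengthLE (G : SimpleGraph V) (c : Sym2 V → C) (L : ℕ) : Prop :=
  ∀ (x : V) (w : G.Walk x x), w.IsCycle → IsProperCycleWalk c w → w.length ≤ L

variable (e : G ≃g G') {c : Sym2 V → C} {L : ℕ}

lemma ProperPathsLengthLE.of_iso (h : ProperPathsLengthLE G c L) :
    ProperPathsLengthLE G' (c ∘ Sym2.map e.symm) L := by
  intro x y w hw hpc
  simpa using h _ _ (w.map e.symm.toHom) (hw.map e.symm.injective)
    ((isProperWalk_map_iff _ _ _).mpr hpc)

lemma ProperCyclesLengthLE.of_iso (h : ProperCyclesLengthLE G c L) :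
    ProperCyclesLengthLE G' (c ∘ Sym2.map e.symm) L := by
  intro x w hw hpc
  simpa using h _ (w.map e.symm.toHom) (hw.map e.symm.injective)
    ((isProperCycleWalk_map_iff _ _ _).mpr hpc)

variable (c)

lemma colorDegree_comp_iso (v : V) :
    colorDegree G' (c ∘ Sym2.map e.symm) (e v) = colorDegree G c v := by
  unfold colorDegree
  congr 1
  ext col
  constructor
  · rintro ⟨w, h, rfl⟩
    exact ⟨e.symm w, by simpa using e.symm.map_adj_iff.mpr h, by simp⟩
  · rintro ⟨w, h, rfl⟩
    exact ⟨e w, e.map_adj_iff.mpr h, by simp⟩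

lemma minColorDegree_comp_iso :
    minColorDegree G' (c ∘ Sym2.map e.symm) = minColorDegree G c := by
  unfold minColorDegree
  rw [← e.surjective.range_comp]
  exact congrArg _ (congrArg _ (funext (colorDegree_comp_iso e c)))

end

lemma minColorDegree_eq_of_forall_le {c : Sym2 V → C} {d : ℕ}
    (hle : ∀ v, d ≤ colorDegree G c v) (v : V) (hv : colorDegree G c v = d) :
    minColorDegree G c = d :=
  le_antisymm (hv ▸ Nat.sInf_le ⟨v, rfl⟩)
    (le_csInf ⟨_, v, rfl⟩ (by rintro _ ⟨w, rfl⟩; exact hle w))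

structure IsApexOverBlocks (G : SimpleGraph V) (a : V) (blk : V → ι) (d : ℕ) : Prop where
  blk_eq_of_adj : ∀ ⦃u v⦄, G.Adj u v → u ≠ a → v ≠ a → blk u = blk v
  encard_block_le : ∀ i, {v | v ≠ a ∧ blk v = i}.encard ≤ d

namespace IsApexOverBlocks

variable {a : V} {blk : V → ι} {d : ℕ}

lemma blk_eq_of_apex_not_mem (hG : IsApexOverBlocks G a blk d) {u v : V} (p : G.Walk u v)
    (ha : a ∉ p.support) : ∀ x ∈ p.support, blk x = blk u := by
  induction p with
  | nil => simp
  | cons h q ih =>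
    rw [Walk.support_cons, List.mem_cons, not_or] at ha
    have hstep := hG.blk_eq_of_adj h (Ne.symm ha.1) fun hx => ha.2 (hx ▸ q.start_mem_support)
    intro x hx
    rcases List.mem_cons.mp hx with rfl | hx
    · rfl
    · rw [ih ha.2 x hx, hstep]

lemma length_lt_of_apex_not_mem (hG : IsApexOverBlocks G a blk d) {u v : V} {p : G.Walk u v}
    (hp : p.IsPath) (ha : a ∉ p.support) : p.length < d := by
  have h := hp.length_add_one_le_encard (s := {v | v ≠ a ∧ blk v = blk u})
    fun x hx => ⟨fun hxa => ha (hxa ▸ hx), hG.blk_eq_of_apex_not_mem p ha x hx⟩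
  exact_mod_cast h.trans (hG.encard_block_le (blk u))

lemma length_le_of_isPath_from_apex (hG : IsApexOverBlocks G a blk d) {v : V}
    {p : G.Walk a v} (hp : p.IsPath) : p.length ≤ d := by
  cases p with
  | nil => exact Nat.zero_le d
  | cons h q =>
    rw [Walk.cons_isPath_iff] at hp
    exact hG.length_lt_of_apex_not_mem hp.1 hp.2

lemma properPathsLengthLE (hG : IsApexOverBlocks G a blk d) (c : Sym2 V → C) :
    ProperPathsLengthLE G c (2 * d) := by
  classical
  intro u v p hp _
  by_cases ha : a ∈ p.support
  · have h₁ := hG.length_le_of_isPath_from_apex (hp.takeUntil ha).reverse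
    have h₂ := hG.length_le_of_isPath_from_apex (hp.dropUntil ha)
    rw [Walk.length_reverse] at h₁
    rw [← p.take_spec ha, Walk.length_append]
    omega
  · have := hG.length_lt_of_apex_not_mem hp ha
    omega

lemma length_le_of_isCycle_of_apex_not_mem (hG : IsApexOverBlocks G a blk d) {u : V}
    {w : G.Walk u u} (hw : w.IsCycle) (ha : a ∉ w.support) : w.length ≤ d := by
  cases w with
  | nil => exact absurd rfl hw.ne_nil
  | cons h q =>
    rw [Walk.support_cons, List.mem_cons, not_or] at ha
    exact hG.length_lt_of_apex_not_mem ((Walk.cons_isCycle_iff q h).mp hw).1 ha.2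

variable {c : Sym2 V → C}

lemma not_isProperCycleWalk_of_start_apex (hG : IsApexOverBlocks G a blk d)
    (hc : ∀ ⦃u v⦄, u ≠ a → v ≠ a → blk u = blk v → c s(a, u) = c s(a, v))
    {w : G.Walk a a} (hw : w.IsCycle) : ¬ IsProperCycleWalk c w := by
  cases w with
  | nil => exact absurd rfl hw.ne_nil
  | @cons _ x _ hx p =>
    have hp : p.IsPath := ((Walk.cons_isCycle_iff p hx).mp hw).1
    -- `y` is the vertex from which `p` returns to `a`
    obtain ⟨y, hy, q, hpq⟩ := Walk.exists_eq_cons_of_ne hx.ne p.reverse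
    have hq := hp.reverse
    rw [hpq, Walk.cons_isPath_iff] at hq
    have hedges : p.edges = q.edges.reverse ++ [s(a, y)] := by
      rw [← p.reverse_reverse, Walk.edges_reverse, hpq, Walk.edges_cons, List.reverse_cons]
    have hblk : blk x = blk y := hG.blk_eq_of_apex_not_mem q hq.2 x q.end_mem_support
    intro hpc
    refine List.IsChain.rel_getLast_head hpc (x := c s(a, y)) (y := c s(a, x)) ?_ (by simp) ?_
    · simp [hedges, List.getLast?_cons]
    · exact hc hy.ne' hx.ne' hblk.symm

lemma properCyclesLengthLE (hG : IsApexOverBlocks G a blk d)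
    (hc : ∀ ⦃u v⦄, u ≠ a → v ≠ a → blk u = blk v → c s(a, u) = c s(a, v)) :
    ProperCyclesLengthLE G c d := by
  classical
  intro u w hw hpc
  by_cases ha : a ∈ w.support
  · exact absurd (hpc.rotate ha) (hG.not_isProperCycleWalk_of_start_apex hc (hw.rotate ha))
  · exact hG.length_le_of_isCycle_of_apex_not_mem hw ha

end IsApexOverBlocks

section ApexCliques

variable (p d : ℕ)

/-- Vertex `none` is the apex and `some (j, i)` is vertex `i` of the `j`-th clique. -/
def cliqueIndex : Option (Fin p × Fin d) → Option (Fin p) := Option.map Prod.fst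

def apexCliques : SimpleGraph (Option (Fin p × Fin d)) where
  Adj u v := u ≠ v ∧ (u = none ∨ v = none ∨ cliqueIndex p d u = cliqueIndex p d v)
  symm := ⟨fun _ _ h => ⟨h.1.symm, by rcases h.2 with h | h | h <;> simp [h]⟩⟩
  loopless := ⟨fun _ h => h.1 rfl⟩

/-- The edges of a clique are coloured `p + i + i'`: not rainbow, but distinct at each
vertex and distinct from the apex colours `j < p`, which is all the argument needs. -/
def apexCliquesColoring : Sym2 (Option (Fin p × Fin d)) → ℕ :=
  Sym2.lift ⟨fun
    | none, some (j, _) | some (j, _), none => j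
    | some (_, i), some (_, i') => p + i + i'
    | none, none => 0, by
    rintro (_ | ⟨j, i⟩) (_ | ⟨j', i'⟩) <;> simp only [Nat.add_right_comm]⟩

variable {p d}

@[simp]
lemma apexCliques_adj_none_some (x : Fin p × Fin d) : (apexCliques p d).Adj none (some x) := by
  simp [apexCliques]

@[simp]
lemma apexCliques_adj_some_none (x : Fin p × Fin d) : (apexCliques p d).Adj (some x) none := by
  simp [apexCliques]

@[simp]
lemma apexCliques_adj_some_some {j j' : Fin p} {i i' : Fin d} :
    (apexCliques p d).Adj (some (j, i)) (some (j', i')) ↔ j = j' ∧ i ≠ i' := by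
  simp [apexCliques, cliqueIndex]
  tauto

variable (p d)

lemma isApexOverBlocks_apexCliques :
    IsApexOverBlocks (apexCliques p d) none (cliqueIndex p d) d where
  blk_eq_of_adj := by
    rintro u v ⟨-, h | h | h⟩ hu hv
    exacts [absurd h hu, absurd h hv, h]
  encard_block_le := by
    rintro (_ | j)
    · simp [cliqueIndex]
    · have hinj : Function.Injective fun i : Fin d => some (j, i) :=
        (Option.some_injective _).comp (Prod.mk_right_injective j)
      calc _ ≤ (Set.range fun i : Fin d => some (j, i)).encard := by
            apply Set.encard_le_encard
            rintro (_ | ⟨j', i⟩) ⟨hv, hj⟩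
            · exact absurd rfl hv
            · simp_all [cliqueIndex]
        _ = d := by simp [← Set.image_univ, hinj.encard_image]

lemma apexCliquesColoring_apex_eq ⦃u v : Option (Fin p × Fin d)⦄ (hu : u ≠ none)
    (hv : v ≠ none) (h : cliqueIndex p d u = cliqueIndex p d v) :
    apexCliquesColoring p d s(none, u) = apexCliquesColoring p d s(none, v) := by
  rcases u with _ | ⟨j, i⟩ <;> rcases v with _ | ⟨j', i'⟩
  all_goals simp_all [cliqueIndex, apexCliquesColoring]

lemma colorDegree_apexCliques_none (hd : 0 < d) :
    colorDegree (apexCliques p d) (apexCliquesColoring p d) none = p := by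
  have : {col | ∃ v, (apexCliques p d).Adj none v ∧ apexCliquesColoring p d s(none, v) = col}
      = Set.range fun j : Fin p => (j : ℕ) := by
    ext col
    constructor
    · rintro ⟨_ | ⟨j, i⟩, h, rfl⟩
      · exact absurd h (apexCliques p d).irrefl
      · exact ⟨j, rfl⟩
    · rintro ⟨j, rfl⟩
      exact ⟨some (j, ⟨0, hd⟩), by simp, rfl⟩
  rw [colorDegree, this, Set.ncard_range_of_injective Fin.val_injective, Nat.card_eq_fintype_card,
    Fintype.card_fin]

lemma colorDegree_apexCliques_some (j : Fin p) (i : Fin d) :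
    colorDegree (apexCliques p d) (apexCliquesColoring p d) (some (j, i)) = d := by
  set g : Fin d → ℕ := fun k => if k = i then j else p + i + k
  have hg : Function.Injective g := by
    intro k k' h
    have := j.isLt
    by_cases hk : k = i <;> by_cases hk' : k' = i <;> simp [g, hk, hk'] at h <;> omega
  have : {col | ∃ v, (apexCliques p d).Adj (some (j, i)) v ∧
      apexCliquesColoring p d s(some (j, i), v) = col} = Set.range g := by
    ext col
    constructor
    · rintro ⟨_ | ⟨j', k⟩, h, rfl⟩
      · exact ⟨i, by simp [g, apexCliquesColoring]⟩
      · rw [apexCliques_adj_some_some] at h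
        exact ⟨k, by simp [g, apexCliquesColoring, Ne.symm h.2]⟩
    · rintro ⟨k, rfl⟩
      by_cases hk : k = i
      · exact ⟨none, by simp, by simp [g, hk, apexCliquesColoring]⟩
      · exact ⟨some (j, k), by simp [Ne.symm hk], by simp [g, hk, apexCliquesColoring]⟩
  rw [colorDegree, this, Set.ncard_range_of_injective hg, Nat.card_eq_fintype_card,
    Fintype.card_fin]

lemma minColorDegree_apexCliques (hd : 0 < d) (hdp : d ≤ p) :
    minColorDegree (apexCliques p d) (apexCliquesColoring p d) = d := by
  refine minColorDegree_eq_of_forall_le ?_ (some (⟨0, hd.trans_le hdp⟩, ⟨0, hd⟩))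
    (colorDegree_apexCliques_some p d _ _)
  rintro (_ | ⟨j, i⟩)
  · rw [colorDegree_apexCliques_none p d hd]
    exact hdp
  · rw [colorDegree_apexCliques_some]

end ApexCliques

/-- For every integer `d ≥ 2` there exists an edge-coloured graph with minimum colour
degree exactly `d` in which every properly coloured path has length at most `2d` and
every properly coloured cycle has length at most `d`. -/
theorem exists_graph_short_pc_paths_and_cycles (d : ℕ) (hd : 2 ≤ d) :
    ∃ (m : ℕ) (G : SimpleGraph (Fin m)) (c : Sym2 (Fin m) → ℕ),
      minColorDegree G c = d ∧
      (∀ (x y : Fin m) (w : G.Walk x y), w.IsPath → IsProperWalk c w →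
        w.length ≤ 2 * d) ∧
      (∀ (x : Fin m) (w : G.Walk x x), w.IsCycle → IsProperCycleWalk c w →
        w.length ≤ d) := by
  let e := Iso.map (Fintype.equivFin (Option (Fin d × Fin d))) (apexCliques d d)
  have hG := isApexOverBlocks_apexCliques d d
  exact ⟨_, _, apexCliquesColoring d d ∘ Sym2.map e.symm,
    (minColorDegree_comp_iso e _).trans (minColorDegree_apexCliques d d (by omega) le_rfl),
    (hG.properPathsLengthLE _).of_iso e,
    (hG.properCyclesLengthLE (apexCliquesColoring_apex_eq d d)).of_iso e⟩
end

section
/- For all integers d ≥ 1 and n ≥ 3d/2 there exists a connected edge-coloured graph G on n vertices with minimum colour degree δ^c(G) = d such that every properly coloured path in G has length at most ⌊3d/2⌋. (Such a graph is obtained by taking a rainbow complete graph on a set X = {x_1, …, x_d}, an independent set Y of n − d further vertices, and joining x_i to every vertex of Y by an edge of a new colour c_i, for each i ∈ [d].) -/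
open SimpleGraph

open SimpleGraph

/-!
Every vertex sees exactly `d` colours: a vertex outside `X` sees the `d` colours `c_x`, and
`x ∈ X` sees `c_x` together with the `d - 1` rainbow colours of its clique edges. On a properly
coloured path no `x ∈ X` sits between two vertices outside `X`, as both edges would have colour
`c_x`; since the outside is independent, consecutive outside vertices on the path are at least
three steps apart. A path of length `ℓ` thus has at most `(ℓ + 3) / 3` vertices outside `X` and
at most `d` in `X`, whence `2ℓ ≤ 3d`.
-/

open SimpleGraph Finset

variable {V C : Type*} {G : SimpleGraph V} {c : Sym2 V → C}

lemma IsProperWalk.of_cons {u v w : V} {h : G.Adj u v} {p : G.Walk v w}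
    (hp : IsProperWalk c (Walk.cons h p)) : IsProperWalk c p :=
  List.IsChain.tail hp

lemma isProperWalk_cons_cons_iff {u v w x : V} {h : G.Adj u v} {h' : G.Adj v w}
    {p : G.Walk w x} :
    IsProperWalk c (Walk.cons h (Walk.cons h' p)) ↔
      c s(u, v) ≠ c s(v, w) ∧ IsProperWalk c (Walk.cons h' p) :=
  List.isChain_cons_cons

lemma List.Nodup.countP_mem_le_card [DecidableEq V] {l : List V} (hl : l.Nodup)
    (s : Finset V) : l.countP (· ∈ s) ≤ #s := by
  rw [List.countP_eq_length_filter, ← List.toFinset_card_of_nodup (hl.filter _)]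
  exact card_le_card fun a ↦ by simp

lemma colorDegree_comp_of_injective {D : Type*} {f : C → D} (hf : Function.Injective f)
    (v : V) : colorDegree G (f ∘ c) v = colorDegree G c v := by
  rw [colorDegree, colorDegree, ← Set.ncard_image_of_injective _ hf]
  congr 1
  ext
  simp

lemma minColorDegree_eq_of_forall [Nonempty V] {k : ℕ} (h : ∀ v, colorDegree G c v = k) :
    minColorDegree G c = k := by
  rw [minColorDegree, funext h, Set.range_const, csInf_singleton]

section ShortProperPaths

variable [DecidableEq V] {X : Finset V}

/-- The sharper slack `2` for walks starting in `X` is what makes the induction go through. -/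
theorem IsProperWalk.three_mul_countP_notMem_le
    (hind : ∀ ⦃y y'⦄, y ∉ X → y' ∉ X → ¬ G.Adj y y')
    (hmono : ∀ ⦃x y y'⦄, y ∉ X → y' ∉ X → G.Adj x y → G.Adj x y' → c s(x, y) = c s(x, y')) :
    ∀ {u v : V} (p : G.Walk u v), IsProperWalk c p →
      3 * p.support.countP (· ∉ X) ≤ p.length + if u ∈ X then 2 else 3
  | u, _, .nil, _ => by by_cases hu : u ∈ X <;> simp [hu]
  | u, _, .cons (v := v₁) h p, hp => by
    by_cases hu : u ∈ X
    · have ih := three_mul_countP_notMem_le hind hmono p hp.of_cons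
      simp only [Walk.support_cons, List.countP_cons, Walk.length_cons, hu, decide_eq_true_eq,
        not_true_eq_false, ↓reduceIte] at ih ⊢
      split_ifs at ih ⊢ <;> omega
    have hv₁ : v₁ ∈ X := by_contra fun hv₁ ↦ hind hu hv₁ h
    cases p with
    | nil => simp [hu, hv₁]
    | @cons _ v₂ _ h' p =>
      have hv₂ : v₂ ∈ X := by_contra fun hv₂ ↦
        (isProperWalk_cons_cons_iff.mp hp).1 (by
          rw [Sym2.eq_swap]; exact hmono hu hv₂ h.symm h')
      have ih := three_mul_countP_notMem_le hind hmono p hp.of_cons.of_cons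
      simp only [Walk.support_cons, List.countP_cons, Walk.length_cons, hu, hv₁, hv₂,
        decide_eq_true_eq, not_true_eq_false, not_false_eq_true, ↓reduceIte] at ih ⊢
      omega

theorem IsProperWalk.two_mul_length_le_of_isPath
    (hind : ∀ ⦃y y'⦄, y ∉ X → y' ∉ X → ¬ G.Adj y y')
    (hmono : ∀ ⦃x y y'⦄, y ∉ X → y' ∉ X → G.Adj x y → G.Adj x y' → c s(x, y) = c s(x, y'))
    {u v : V} {p : G.Walk u v} (hpath : p.IsPath) (hp : IsProperWalk c p) :
    2 * p.length ≤ 3 * #X := by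
  have hout := hp.three_mul_countP_notMem_le hind hmono p
  have hin := hpath.support_nodup.countP_mem_le_card X
  have hsplit : p.length + 1 = p.support.countP (· ∈ X) + p.support.countP (· ∉ X) := by
    rw [← p.length_support, List.length_eq_countP_add_countP (· ∈ X)]
    simp
  split_ifs at hout <;> omega

end ShortProperPaths

def completeSplitGraph (X : Finset V) : SimpleGraph V where
  Adj u v := u ≠ v ∧ (u ∈ X ∨ v ∈ X)
  symm := ⟨fun _ _ h ↦ ⟨h.1.symm, h.2.symm⟩⟩
  loopless := ⟨fun _ h ↦ h.1 rfl⟩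

/-- Clique edges are coloured by themselves; the diagonal `s(x, x)`, which is not an edge, is the
paper's new colour `c_x` on all edges from `x ∈ X` to the outside. -/
def splitColoring [DecidableEq V] (X : Finset V) : Sym2 V → Sym2 V :=
  Sym2.lift ⟨fun u v ↦
    if u ∈ X ∧ v ∉ X then Sym2.diag u else if v ∈ X ∧ u ∉ X then Sym2.diag v else s(u, v),
    fun u v ↦ by dsimp only; split_ifs <;> first | rfl | exact Sym2.eq_swap | tauto⟩

section CompleteSplitGraph

variable {X : Finset V} {u v : V}

@[simp]
lemma completeSplitGraph_adj : (completeSplitGraph X).Adj u v ↔ u ≠ v ∧ (u ∈ X ∨ v ∈ X) :=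
  Iff.rfl

lemma completeSplitGraph_not_adj (hu : u ∉ X) (hv : v ∉ X) : ¬(completeSplitGraph X).Adj u v :=
  fun h ↦ h.2.elim hu hv

variable [DecidableEq V]

lemma splitColoring_mk_of_mem_of_mem (hu : u ∈ X) (hv : v ∈ X) :
    splitColoring X s(u, v) = s(u, v) := by
  simp [splitColoring, hu, hv]

lemma splitColoring_mk_of_mem_of_notMem (hu : u ∈ X) (hv : v ∉ X) :
    splitColoring X s(u, v) = Sym2.diag u := by
  simp [splitColoring, hu, hv]

lemma splitColoring_mk_of_notMem_of_mem (hu : u ∉ X) (hv : v ∈ X) :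
    splitColoring X s(u, v) = Sym2.diag v := by
  rw [Sym2.eq_swap, splitColoring_mk_of_mem_of_notMem hv hu]

lemma completeSplitGraph_connected {x : V} (hx : x ∈ X) : (completeSplitGraph X).Connected := by
  refine (connected_iff_exists_forall_reachable _).mpr ⟨x, fun v ↦ ?_⟩
  by_cases hxv : x = v
  · exact hxv ▸ Reachable.refl x
  · exact (completeSplitGraph_adj.mpr ⟨hxv, Or.inl hx⟩).reachable

lemma colorDegree_splitColoring_of_mem {y : V} (hv : v ∈ X) (hy : y ∉ X) :
    colorDegree (completeSplitGraph X) (splitColoring X) v = #X := by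
  suffices {col | ∃ w, (completeSplitGraph X).Adj v w ∧ splitColoring X s(v, w) = col} =
      (s(v, ·)) '' X by
    rw [colorDegree, this, Set.ncard_image_of_injective _ fun _ _ ↦ Sym2.congr_right.mp,
      Set.ncard_coe_finset]
  ext col
  constructor
  · rintro ⟨w, -, rfl⟩
    by_cases hw : w ∈ X
    · exact ⟨w, hw, (splitColoring_mk_of_mem_of_mem hv hw).symm⟩
    · exact ⟨v, hv, (splitColoring_mk_of_mem_of_notMem hv hw).symm⟩
  · rintro ⟨x, hx, rfl⟩
    by_cases hxv : x = v
    · subst hxv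
      exact ⟨y, completeSplitGraph_adj.mpr ⟨by grind, Or.inl hv⟩,
        splitColoring_mk_of_mem_of_notMem hv hy⟩
    · exact ⟨x, completeSplitGraph_adj.mpr ⟨Ne.symm hxv, Or.inl hv⟩,
        splitColoring_mk_of_mem_of_mem hv hx⟩

lemma colorDegree_splitColoring_of_notMem (hv : v ∉ X) :
    colorDegree (completeSplitGraph X) (splitColoring X) v = #X := by
  suffices {col | ∃ w, (completeSplitGraph X).Adj v w ∧ splitColoring X s(v, w) = col} =
      Sym2.diag '' X by
    rw [colorDegree, this, Set.ncard_image_of_injective _ Sym2.diag_injective,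
      Set.ncard_coe_finset]
  ext col
  constructor
  · rintro ⟨w, hvw, rfl⟩
    have hw : w ∈ X := (completeSplitGraph_adj.mp hvw).2.resolve_left hv
    exact ⟨w, hw, (splitColoring_mk_of_notMem_of_mem hv hw).symm⟩
  · rintro ⟨x, hx, rfl⟩
    exact ⟨x, completeSplitGraph_adj.mpr ⟨by grind, Or.inr hx⟩,
      splitColoring_mk_of_notMem_of_mem hv hx⟩

lemma colorDegree_splitColoring {y : V} (hy : y ∉ X) (v : V) :
    colorDegree (completeSplitGraph X) (splitColoring X) v = #X := by
  by_cases hv : v ∈ X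
  · exact colorDegree_splitColoring_of_mem hv hy
  · exact colorDegree_splitColoring_of_notMem hv

lemma splitColoring_eq_of_adj_of_notMem {x y y' : V} (hy : y ∉ X) (hy' : y' ∉ X)
    (h : (completeSplitGraph X).Adj x y) :
    splitColoring X s(x, y) = splitColoring X s(x, y') := by
  have hx : x ∈ X := (completeSplitGraph_adj.mp h).2.resolve_right hy
  rw [splitColoring_mk_of_mem_of_notMem hx hy, splitColoring_mk_of_mem_of_notMem hx hy']

end CompleteSplitGraph

/-- For all integers `d ≥ 1` and `n ≥ 3d/2` there exists a connected edge-coloured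
graph on `n` vertices with minimum colour degree exactly `d` in which every properly
coloured path has length at most `⌊3d/2⌋`. -/
theorem exists_connected_graph_short_pc_paths (d n : ℕ) (hd : 1 ≤ d) (hn : 3 * d ≤ 2 * n) :
    ∃ (G : SimpleGraph (Fin n)) (c : Sym2 (Fin n) → ℕ),
      G.Connected ∧ minColorDegree G c = d ∧
      (∀ (x y : Fin n) (w : G.Walk x y), w.IsPath → IsProperWalk c w →
        w.length ≤ 3 * d / 2) := by
  have hdn : d < n := by omega
  let X : Finset (Fin n) := Iio ⟨d, hdn⟩
  have hX : #X = d := Fin.card_Iio _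
  have : Nonempty (Fin n) := ⟨⟨d, hdn⟩⟩
  have hy : (⟨d, hdn⟩ : Fin n) ∉ X := by simp [X]
  have hx : (⟨0, by omega⟩ : Fin n) ∈ X := by simp [X, Fin.lt_def]; omega
  obtain ⟨f, hf⟩ := Countable.exists_injective_nat (Sym2 (Fin n))
  refine ⟨completeSplitGraph X, f ∘ splitColoring X, completeSplitGraph_connected hx,
    minColorDegree_eq_of_forall fun v ↦ ?_, fun _ _ w hpath hw ↦ ?_⟩
  · rw [colorDegree_comp_of_injective hf, colorDegree_splitColoring hy, hX]
  · have := hw.two_mul_length_le_of_isPath (fun _ _ ↦ completeSplitGraph_not_adj)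
      (fun _ _ _ hy₁ hy₂ h _ ↦ by
        simp only [Function.comp_apply, splitColoring_eq_of_adj_of_notMem hy₁ hy₂ h]) hpath
    omega
end

section
/- Let G be an edge-coloured graph with minimum colour degree δ^c(G) ≥ d and let P = (v_1, …, v_l) be a properly coloured path in G that is not extensible. If P has no crossing with respect to some choice of colour neighbourhoods N^c(v_1;P) and N^c(v_l;P), then l ≥ 2d + 1, i.e. P has length at least 2d. -/
/-!
Non-extensibility puts both colour neighbourhoods on the path: a colour neighbour `u ∉ P` of
`v₁` could be prepended, because `v₂` is also in `N^c(v₁;P)`, so the edges `u v₁` and `v₁ v₂`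
have different colours. With no crossing, every position (`0, …, l - 1`) of a vertex of
`N^c(v₁;P)` is at most every position of a vertex of `N^c(v_l;P)`. The positions of
`N^c(v₁;P)` lie in `1, …, l - 1`, so shifting them down by one makes them disjoint from
those of `N^c(v_l;P)`, and both then lie in `0, …, l - 2`. Hence
`2d ≤ |N^c(v₁;P)| + |N^c(v_l;P)| ≤ l - 1`.
-/

open SimpleGraph

open SimpleGraph

/-- A properly coloured path is extensible if a vertex outside it can be appended at
either end to give a longer properly coloured path. -/
def ExtensibleWalk {V C : Type*} {G : SimpleGraph V} (c : Sym2 V → C) {u v : V}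
    (w : G.Walk u v) : Prop :=
  (∃ (x : V) (h : G.Adj v x), (w.concat h).IsPath ∧ IsProperWalk c (w.concat h)) ∨
  (∃ (x : V) (h : G.Adj x u), (SimpleGraph.Walk.cons h w).IsPath ∧
    IsProperWalk c (SimpleGraph.Walk.cons h w))

/-- `N` is a colour neighbourhood of `v`: a set of neighbours of `v` joined to `v` by
pairwise differently coloured edges, of maximal size (the colour degree of `v`). -/
def IsColorNbhd {V C : Type*} (G : SimpleGraph V) (c : Sym2 V → C) (v : V)
    (N : Finset V) : Prop :=
  (∀ x ∈ N, G.Adj v x) ∧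
  (∀ x ∈ N, ∀ y ∈ N, x ≠ y → c s(v, x) ≠ c s(v, y)) ∧
  N.card = colorDegree G c v


open Finset

theorem Finset.card_add_card_le_of_forall_le {I J : Finset ℕ} {L : ℕ}
    (hI : ∀ i ∈ I, 1 ≤ i ∧ i ≤ L) (hJ : ∀ j ∈ J, j < L) (hIJ : ∀ i ∈ I, ∀ j ∈ J, i ≤ j) :
    #I + #J ≤ L := by
  set I' := I.image (· - 1)
  have hcard : #I' = #I := card_image_of_injOn fun a ha b hb hab => by
    have := hI a ha
    have := hI b hb
    omega
  have hdisj : Disjoint I' J := by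
    refine disjoint_left.2 fun k hk hkJ => ?_
    obtain ⟨i, hi, rfl⟩ := mem_image.1 hk
    have := hI i hi
    have := hIJ i hi _ hkJ
    omega
  have hsub : I' ∪ J ⊆ range L := by
    intro k hk
    rcases mem_union.1 hk with hk | hk
    · obtain ⟨i, hi, rfl⟩ := mem_image.1 hk
      have := hI i hi
      exact mem_range.2 (by omega)
    · exact mem_range.2 (hJ k hk)
  calc #I + #J = #(I' ∪ J) := by rw [card_union_of_disjoint hdisj, hcard]
    _ ≤ #(range L) := card_le_card hsub
    _ = L := card_range L

section

variable {V C : Type*} {G : SimpleGraph V} {c : Sym2 V → C}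

theorem IsProperWalk.reverse {u v : V} {w : G.Walk u v} (h : IsProperWalk c w) :
    IsProperWalk c w.reverse := by
  unfold IsProperWalk at *
  rw [Walk.edges_reverse, List.map_reverse, List.Chain', List.isChain_reverse]
  exact h.imp fun _ _ hab => hab.symm

theorem ExtensibleWalk.reverse {u v : V} {w : G.Walk u v} (h : ExtensibleWalk c w) :
    ExtensibleWalk c w.reverse := by
  rcases h with ⟨z, h, hp, hpc⟩ | ⟨z, h, hp, hpc⟩
  · refine Or.inr ⟨z, h.symm, ?_, ?_⟩ <;> rw [← Walk.reverse_concat]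
    exacts [hp.reverse, hpc.reverse]
  · refine Or.inl ⟨z, h.symm, ?_, ?_⟩ <;>
      rw [← Walk.reverse_reverse (w.reverse.concat _), Walk.reverse_concat, Walk.reverse_reverse]
    exacts [hp.reverse, hpc.reverse]

theorem mem_support_of_not_extensible {x y : V} {w : G.Walk x y} (hp : w.IsPath)
    (hpc : IsProperWalk c w) (hne : ¬ ExtensibleWalk c w) {N : Finset V}
    (hadj : ∀ z ∈ N, G.Adj x z) (hcol : ∀ a ∈ N, ∀ b ∈ N, a ≠ b → c s(x, a) ≠ c s(x, b))
    (hsnd : ∀ z, w.support[1]? = some z → z ∈ N) {u : V} (hu : u ∈ N) : u ∈ w.support := by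
  by_contra hnot
  refine hne (Or.inr ⟨u, (hadj u hu).symm, hp.cons hnot, ?_⟩)
  unfold IsProperWalk
  rw [Walk.edges_cons, List.map_cons, List.Chain', List.isChain_cons]
  refine ⟨?_, hpc⟩
  cases w with
  | nil => simp
  | @cons _ b _ hb w' =>
    have hbN : b ∈ N := hsnd b (by cases w' <;> rfl)
    have hub : u ≠ b := by
      rintro rfl
      exact hnot (by simp)
    simpa [Sym2.eq_swap] using hcol u hu b hbN hub

theorem card_add_card_le_length_of_not_crossing [DecidableEq V] {x y : V} {w : G.Walk x y}
    (hp : w.IsPath) {A B : Finset V} (hA : ∀ a ∈ A, a ∈ w.support) (hB : ∀ b ∈ B, b ∈ w.support)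
    (hxA : x ∉ A) (hyB : y ∉ B)
    (hnc : ¬ ∃ i j : Fin w.support.length, i < j ∧
      w.support.get i ∈ B ∧ w.support.get j ∈ A) :
    #A + #B ≤ w.length := by
  set idx : V → ℕ := fun v => w.support.idxOf v
  have hlt : ∀ v ∈ w.support, idx v < w.support.length := fun _ => List.idxOf_lt_length_iff.2
  have hinj : ∀ S : Finset V, (∀ v ∈ S, v ∈ w.support) → #(S.image idx) = #S :=
    fun S hS => card_image_of_injOn fun a ha b _ hab => (List.idxOf_inj (hS a ha)).1 hab
  have hidx_x : idx x = 0 := by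
    show w.support.idxOf x = 0
    rw [← w.cons_tail_support]
    exact List.idxOf_cons_self
  have hidx_y : idx y = w.length := by
    simpa [idx, w.support_getElem_length] using
      hp.support_nodup.idxOf_getElem w.length (by simp)
  have hle : ∀ a ∈ A, ∀ b ∈ B, idx a ≤ idx b := by
    intro a ha b hb
    by_contra! hba
    exact hnc ⟨⟨idx b, hlt b (hB b hb)⟩, ⟨idx a, hlt a (hA a ha)⟩, hba, by simpa [idx] using hb,
      by simpa [idx] using ha⟩
  rw [← hinj A hA, ← hinj B hB]
  refine card_add_card_le_of_forall_le ?_ ?_ (by simpa only [forall_mem_image] using hle)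
  · simp only [forall_mem_image]
    intro a ha
    have hax : idx a ≠ idx x := fun h => hxA ((List.idxOf_inj (hA a ha)).1 h ▸ ha)
    have := hlt a (hA a ha)
    rw [Walk.length_support] at this
    omega
  · simp only [forall_mem_image]
    intro b hb
    have hby : idx b ≠ idx y := fun h => hyB ((List.idxOf_inj (hB b hb)).1 h ▸ hb)
    have := hlt b (hB b hb)
    rw [Walk.length_support] at this
    omega

end

theorem length_of_noncrossing_nonextensible_pc_path_general {V C : Type*} (d : ℕ)
    (G : SimpleGraph V) (c : Sym2 V → C) (hδ : d ≤ minColorDegree G c)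
    {x y : V} (w : G.Walk x y) (hp : w.IsPath) (hpc : IsProperWalk c w)
    (hne : ¬ ExtensibleWalk c w)
    (N1 Nl : Finset V) (hN1 : IsColorNbhd G c x N1) (hNl : IsColorNbhd G c y Nl)
    (hsnd : ∀ z, w.support[1]? = some z → z ∈ N1)
    (hsnd' : ∀ z, w.support.reverse[1]? = some z → z ∈ Nl)
    (hnc : ¬ ∃ i j : Fin w.support.length, i < j ∧
      w.support.get i ∈ Nl ∧ w.support.get j ∈ N1) :
    2 * d ≤ w.length := by
  classical
  obtain ⟨hadj1, hcol1, hcard1⟩ := hN1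
  obtain ⟨hadjl, hcoll, hcardl⟩ := hNl
  have hdeg : ∀ v, d ≤ colorDegree G c v := fun v => hδ.trans (Nat.sInf_le ⟨v, rfl⟩)
  have hsub1 : ∀ u ∈ N1, u ∈ w.support := fun u =>
    mem_support_of_not_extensible hp hpc hne hadj1 hcol1 hsnd
  have hsubl : ∀ u ∈ Nl, u ∈ w.support := fun u hu => by
    simpa using mem_support_of_not_extensible hp.reverse hpc.reverse
      (fun h => hne (by simpa using h.reverse)) hadjl hcoll (by simpa using hsnd') hu
  have hcard := card_add_card_le_length_of_not_crossing hp hsub1 hsubl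
    (fun h => (hadj1 x h).ne rfl) (fun h => (hadjl y h).ne rfl) hnc
  have := hdeg x
  have := hdeg y
  omega

/-- If a non-extensible properly coloured path has no crossing with respect to some
choice of colour neighbourhoods of its endpoints (containing the second and the
second-to-last vertex respectively), then its length is at least `2d`. -/
theorem length_of_noncrossing_nonextensible_pc_path {V C : Type*} [Fintype V] (d : ℕ)
    (G : SimpleGraph V) (c : Sym2 V → C) (hδ : d ≤ minColorDegree G c)
    {x y : V} (w : G.Walk x y) (hp : w.IsPath) (hpc : IsProperWalk c w)
    (hne : ¬ ExtensibleWalk c w)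
    (N1 Nl : Finset V) (hN1 : IsColorNbhd G c x N1) (hNl : IsColorNbhd G c y Nl)
    (hsnd : ∀ z, w.support[1]? = some z → z ∈ N1)
    (hsnd' : ∀ z, w.support.reverse[1]? = some z → z ∈ Nl)
    (hnc : ¬ ∃ i j : Fin w.support.length, i < j ∧
      w.support.get i ∈ Nl ∧ w.support.get j ∈ N1) :
    2 * d ≤ w.length :=
  length_of_noncrossing_nonextensible_pc_path_general d G c hδ w hp hpc hne N1 Nl hN1 hNl hsnd hsnd'
    hnc
end

section
/- Let G be an edge-coloured graph with minimum colour degree δ^c(G) ≥ 2, and let P be a maximal properly coloured path in G with endpoints x and y. If P has a crossing with respect to some choice of colour neighbourhoods N^c(x;P) and N^c(y;P), then the induced subgraph G[V(P)] contains a properly coloured cycle. -/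
open SimpleGraph

open SimpleGraph

/-- The list of edges (as unordered pairs) between consecutive entries of a list. -/
def consecEdges {V : Type*} (L : List V) : List (Sym2 V) :=
  List.zipWith (fun a b => s(a, b)) L L.tail

/-- The nonempty list `L` of distinct vertices forms a properly coloured path:
consecutive vertices are adjacent and consecutive edges receive distinct colours. -/
def IsProperPathList {V C : Type*} (G : SimpleGraph V) (c : Sym2 V → C)
    (L : List V) : Prop :=
  L ≠ [] ∧ L.Nodup ∧
  (∀ e ∈ consecEdges L, e ∈ G.edgeSet) ∧
  List.Chain' (· ≠ ·) ((consecEdges L).map c)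

/-- The list `L` of distinct vertices forms a properly coloured cycle: consecutive
vertices (cyclically) are adjacent, and consecutive edges (cyclically) receive
distinct colours. -/
def IsProperCycleList {V C : Type*} (G : SimpleGraph V) (c : Sym2 V → C)
    (L : List V) : Prop :=
  3 ≤ L.length ∧ L.Nodup ∧
  (∀ e ∈ consecEdges (L ++ L.take 1), e ∈ G.edgeSet) ∧
  List.Chain' (· ≠ ·) ((consecEdges (L ++ L.take 2)).map c)

/-- A properly coloured path is extensible if a new vertex can be appended at either
end so that the result is again a properly coloured path. -/
def ExtensibleList {V C : Type*} (G : SimpleGraph V) (c : Sym2 V → C)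
    (L : List V) : Prop :=
  ∃ x : V, IsProperPathList G c (L ++ [x]) ∨ IsProperPathList G c (x :: L)

/-- One step of rotation (with pivot the `j`-th vertex, keeping the first endpoint
fixed) or reflection of a properly coloured path. -/
def RotRefStep {V C : Type*} (G : SimpleGraph V) (c : Sym2 V → C)
    (L L' : List V) : Prop :=
  L' = L.reverse ∨
  (IsProperPathList G c L' ∧
    ∃ j, 1 ≤ j ∧ j + 2 ≤ L.length ∧ L' = L.take j ++ (L.drop j).reverse)

/-- A properly coloured path is maximal if no path obtained from it by a sequence of
rotations and reflections is extensible. -/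
def MaximalPathList {V C : Type*} (G : SimpleGraph V) (c : Sym2 V → C)
    (L : List V) : Prop :=
  ∀ L', Relation.ReflTransGen (RotRefStep G c) L L' → ¬ ExtensibleList G c L'

/-! Write `P = v₀ ⋯ v_{l-1}`. Both colour neighbourhoods have at least two vertices and, by
maximality, lie on `P` (a vertex of `N^c(v₀)` off `P` could be put in front of `v₀`); so the
crossing `v_a ∈ N^c(v_{l-1})`, `v_b ∈ N^c(v₀)`, `a < b`, may be taken with `a ≤ l - 3` and `2 ≤ b`.
If `c(v_{b-1}v_b) ≠ c(v_b v₀)`, the chord `v_b v₀` closes `v₀ ⋯ v_b` into a properly coloured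
cycle: at `v₀` its colour differs from `c(v₀v₁)` because `v₁, v_b ∈ N^c(v₀)`. Symmetrically if
`c(v_{a+1}v_a) ≠ c(v_a v_{l-1})`. Otherwise both chords repeat the colour of a path edge at their
inner end, and the cycle `v₀ ⋯ v_a v_{l-1} ⋯ v_b`, obtained by rotating `P` at the pivot `v_a` and
closing with the chord `v_b v₀`, is properly coloured. -/

section ProperColouring

variable {V C : Type*} {G : SimpleGraph V} {c : Sym2 V → C} {L M : List V}

theorem forall_mem_consecEdges_iff {p : Sym2 V → Prop} :
    (∀ e ∈ consecEdges L, p e) ↔ ∀ i (h : i + 1 < L.length), p s(L[i], L[i + 1]) := by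
  simp [consecEdges, List.forall_mem_iff_getElem, List.getElem_zipWith, List.getElem_tail,
    Nat.lt_sub_iff_add_lt]

theorem isChain_map_consecEdges_iff {R : C → C → Prop} {f : Sym2 V → C} :
    List.IsChain R ((consecEdges L).map f) ↔
      ∀ i (h : i + 2 < L.length), R (f s(L[i], L[i + 1])) (f s(L[i + 1], L[i + 2])) := by
  simp [List.isChain_iff_getElem, consecEdges, List.getElem_zipWith, Nat.lt_sub_iff_add_lt]

theorem isProperPathList_iff :
    IsProperPathList G c L ↔ L ≠ [] ∧ L.Nodup ∧
      (∀ i (h : i + 1 < L.length), G.Adj L[i] L[i + 1]) ∧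
      ∀ i (h : i + 2 < L.length), c s(L[i], L[i + 1]) ≠ c s(L[i + 1], L[i + 2]) := by
  unfold IsProperPathList
  simp only [forall_mem_consecEdges_iff, SimpleGraph.mem_edgeSet]
  exact Iff.rfl.and (Iff.rfl.and (Iff.rfl.and isChain_map_consecEdges_iff))

theorem color_ne_comm {u v w : V} (h : c s(u, v) ≠ c s(v, w)) : c s(w, v) ≠ c s(v, u) := by
  rw [Sym2.eq_swap (a := w), Sym2.eq_swap (a := v) (b := u)]; exact h.symm

theorem getElem_reverse_of_add {i j : ℕ} (hi : i < L.reverse.length)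
    (h : i + j + 1 = L.length) :
    L.reverse[i] = L[j] := by
  rw [List.getElem_reverse]; exact getElem_congr_idx (by omega)

namespace IsProperPathList

theorem nodup (hL : IsProperPathList G c L) : L.Nodup := hL.2.1

theorem adj (hL : IsProperPathList G c L) {i j : ℕ} (hj : j < L.length) (hij : j = i + 1) :
    G.Adj L[i] L[j] := by
  subst hij; exact (isProperPathList_iff.mp hL).2.2.1 i hj

theorem color_ne (hL : IsProperPathList G c L) {i j k : ℕ} (hk : k < L.length) (hj : j = i + 1)
    (hk' : k = i + 2) :
    c s(L[i], L[j]) ≠ c s(L[j], L[k]) := by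
  subst hj hk'; exact (isProperPathList_iff.mp hL).2.2.2 i hk

theorem getElem_ne (hL : IsProperPathList G c L) {i j : ℕ} (hi : i < L.length)
    (hj : j < L.length) (hij : i ≠ j) : L[i] ≠ L[j] :=
  fun h => hij ((hL.nodup.getElem_inj_iff).mp h)

theorem take (hL : IsProperPathList G c L) {n : ℕ} (hn : 0 < n) :
    IsProperPathList G c (L.take n) := by
  refine isProperPathList_iff.mpr ⟨?_, (List.take_sublist n L).nodup hL.nodup, ?_, ?_⟩
  · simpa [List.take_eq_nil_iff, hn.ne'] using hL.1
  · intro i h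
    simp only [List.getElem_take]
    exact hL.adj _ rfl
  · intro i h
    simp only [List.getElem_take]
    exact hL.color_ne _ rfl rfl

theorem reverse (hL : IsProperPathList G c L) : IsProperPathList G c L.reverse := by
  refine isProperPathList_iff.mpr ⟨by simpa using hL.1, List.nodup_reverse.mpr hL.nodup, ?_, ?_⟩
  · intro i h
    simp only [List.getElem_reverse]
    exact (hL.adj _ (by simp at h; omega)).symm
  · intro i h
    simp only [List.length_reverse] at h
    simp only [List.getElem_reverse]
    exact color_ne_comm (hL.color_ne (i := L.length - 1 - (i + 2)) _ (by omega) (by omega))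

end IsProperPathList

theorem getElem_take_append_reverse_drop_of_lt {k i : ℕ}
    (h : i < (L.take k ++ (L.drop k).reverse).length) (hi : i < k) :
    (L.take k ++ (L.drop k).reverse)[i] = L[i]'(by simp at h; omega) := by
  rw [List.getElem_append_left (by simp at h ⊢; omega), List.getElem_take]

theorem getElem_take_append_reverse_drop_of_le {k i j : ℕ}
    (h : i < (L.take k ++ (L.drop k).reverse).length) (hi : k ≤ i)
    (hj : i + j + 1 = L.length + k) :
    (L.take k ++ (L.drop k).reverse)[i] = L[j]'(by simp at h; omega) := by
  have h' := h
  simp only [List.length_append, List.length_take, List.length_reverse, List.length_drop] at h'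
  rw [List.getElem_append_right (by simp; omega)]
  simp only [List.getElem_reverse, List.getElem_drop, List.length_drop, List.length_take]
  exact getElem_congr_idx (by omega)

-- `L.take (a + 1) ++ (L.drop (a + 1)).reverse` is the rotation of `L` with pivot `L[a]`.
theorem IsProperPathList.take_append_reverse_drop (hL : IsProperPathList G c L) {a : ℕ}
    (ha : a + 3 ≤ L.length) (hadj : G.Adj L[a] L[L.length - 1])
    (hpivot : 0 < a → c s(L[a - 1], L[a]) ≠ c s(L[a], L[L.length - 1]))
    (hend : c s(L[a], L[L.length - 1]) ≠ c s(L[L.length - 1], L[L.length - 2])) :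
    IsProperPathList G c (L.take (a + 1) ++ (L.drop (a + 1)).reverse) := by
  have hlen : (L.take (a + 1) ++ (L.drop (a + 1)).reverse).length = L.length := by
    simp; omega
  refine isProperPathList_iff.mpr ⟨?_, ?_, fun i h => ?_, fun i h => ?_⟩
  · rw [← List.length_pos_iff, hlen]; omega
  · refine (List.Perm.append_left _ (List.reverse_perm _)).nodup_iff.mpr ?_
    rw [List.take_append_drop]; exact hL.nodup
  · rw [hlen] at h
    rcases (by omega : i + 1 ≤ a ∨ i = a ∨ a < i) with hi | rfl | hi
    · rw [getElem_take_append_reverse_drop_of_lt _ (by omega),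
        getElem_take_append_reverse_drop_of_lt _ (by omega)]
      exact hL.adj _ rfl
    · rw [getElem_take_append_reverse_drop_of_lt _ (by omega),
        getElem_take_append_reverse_drop_of_le (j := L.length - 1) _ le_rfl (by omega)]
      exact hadj
    · rw [getElem_take_append_reverse_drop_of_le (j := L.length + a - i) _ (by omega) (by omega),
        getElem_take_append_reverse_drop_of_le (j := L.length + a - i - 1) _ (by omega)
          (by omega)]
      exact (hL.adj _ (by omega)).symm
  · rw [hlen] at h
    rcases (by omega : i + 2 ≤ a ∨ i + 1 = a ∨ i = a ∨ a < i) with hi | rfl | rfl | hi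
    · rw [getElem_take_append_reverse_drop_of_lt _ (by omega),
        getElem_take_append_reverse_drop_of_lt _ (by omega),
        getElem_take_append_reverse_drop_of_lt _ (by omega)]
      exact hL.color_ne _ rfl rfl
    · rw [getElem_take_append_reverse_drop_of_lt _ (by omega),
        getElem_take_append_reverse_drop_of_lt _ (by omega),
        getElem_take_append_reverse_drop_of_le (j := L.length - 1) _ le_rfl (by omega)]
      exact hpivot (by omega)
    · rw [getElem_take_append_reverse_drop_of_lt _ (by omega),
        getElem_take_append_reverse_drop_of_le (j := L.length - 1) _ le_rfl (by omega),
        getElem_take_append_reverse_drop_of_le (j := L.length - 2) _ (by omega) (by omega)]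
      exact hend
    · rw [getElem_take_append_reverse_drop_of_le (j := L.length + a - i) _ (by omega) (by omega),
        getElem_take_append_reverse_drop_of_le (j := L.length + a - i - 1) _ (by omega)
          (by omega),
        getElem_take_append_reverse_drop_of_le (j := L.length + a - i - 2) _ (by omega)
          (by omega)]
      exact color_ne_comm (hL.color_ne _ (by omega) (by omega))

theorem getElem_append_take_self_of_le {n i j : ℕ} (h : i < (M ++ M.take n).length)
    (hj : i = M.length + j) :
    (M ++ M.take n)[i] = M[j]'(by simp at h; omega) := by
  rw [List.getElem_append_right (by omega), List.getElem_take]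
  exact getElem_congr_idx (by omega)

theorem IsProperPathList.isProperCycleList (hM : IsProperPathList G c M) (h3 : 3 ≤ M.length)
    (hadj : G.Adj M[M.length - 1] M[0])
    (hlast : c s(M[M.length - 2], M[M.length - 1]) ≠ c s(M[M.length - 1], M[0]))
    (hfirst : c s(M[M.length - 1], M[0]) ≠ c s(M[0], M[1])) :
    IsProperCycleList G c M := by
  refine ⟨h3, hM.nodup, forall_mem_consecEdges_iff.mpr fun i h => ?_,
    isChain_map_consecEdges_iff.mpr fun i h => ?_⟩
  · simp only [List.length_append, List.length_take] at h
    rcases (by omega : i + 1 < M.length ∨ i + 1 = M.length) with hi | hi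
    · rw [List.getElem_append_left (by omega), List.getElem_append_left hi]
      exact G.mem_edgeSet.mpr (hM.adj hi rfl)
    · rw [List.getElem_append_left (by omega),
        getElem_append_take_self_of_le (j := 0) _ (by omega)]
      convert G.mem_edgeSet.mpr hadj using 4; omega
  · simp only [List.length_append, List.length_take] at h
    rcases (by omega : i + 2 < M.length ∨ i + 2 = M.length ∨ i + 1 = M.length)
      with hi | hi | hi
    · rw [List.getElem_append_left (by omega), List.getElem_append_left (by omega),
        List.getElem_append_left hi]
      exact hM.color_ne hi rfl rfl
    · rw [List.getElem_append_left (by omega), List.getElem_append_left (by omega),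
        getElem_append_take_self_of_le (j := 0) _ (by omega)]
      convert hlast using 5 <;> omega
    · rw [List.getElem_append_left (by omega),
        getElem_append_take_self_of_le (j := 0) _ (by omega),
        getElem_append_take_self_of_le (j := 1) _ (by omega)]
      convert hfirst using 5; omega

theorem IsProperPathList.isProperCycleList_take {P : List V} (hP : IsProperPathList G c P)
    {j : ℕ} (hj : j < P.length) (hj2 : 2 ≤ j) (hadj : G.Adj P[j] P[0])
    (hlast : c s(P[j - 1], P[j]) ≠ c s(P[j], P[0]))
    (hfirst : c s(P[j], P[0]) ≠ c s(P[0], P[1])) :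
    IsProperCycleList G c (P.take (j + 1)) := by
  have hlen : (P.take (j + 1)).length = j + 1 := by simp; omega
  refine (hP.take (by omega : 0 < j + 1)).isProperCycleList (by omega) ?_ ?_ ?_ <;>
    simpa only [List.getElem_take, hlen, Nat.add_sub_cancel, show j + 1 - 2 = j - 1 by omega]

theorem IsColorNbhd.color_ne {v x y : V} {N : Finset V} (hN : IsColorNbhd G c v N)
    (hx : x ∈ N) (hy : y ∈ N) (hxy : x ≠ y) : c s(v, x) ≠ c s(v, y) :=
  hN.2.1 x hx y hy hxy

theorem IsColorNbhd.two_le_card {v : V} {N : Finset V} (hN : IsColorNbhd G c v N)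
    (h2 : 2 ≤ minColorDegree G c) : 2 ≤ N.card :=
  hN.2.2 ▸ h2.trans (Nat.sInf_le ⟨v, rfl⟩)

theorem IsProperPathList.mem_of_mem_colorNbhd (hL : IsProperPathList G c L)
    (hl : 2 ≤ L.length) {N : Finset V} (hN : IsColorNbhd G c L[0] N) (h1 : L[1] ∈ N)
    (hext : ∀ v, ¬ IsProperPathList G c (v :: L)) {v : V} (hv : v ∈ N) : v ∈ L := by
  by_contra hvL
  refine hext v (isProperPathList_iff.mpr ⟨List.cons_ne_nil _ _,
    List.nodup_cons.mpr ⟨hvL, hL.nodup⟩, fun i h => ?_, fun i h => ?_⟩)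
  · cases i with
    | zero => exact (hN.1 v hv).symm
    | succ i => exact hL.adj _ rfl
  · cases i with
    | zero =>
      have hv1 : v ≠ L[1] := fun h => hvL (h ▸ List.getElem_mem _)
      simpa only [List.getElem_cons_zero, List.getElem_cons_succ, Sym2.eq_swap]
        using hN.color_ne hv h1 hv1
    | succ i => exact hL.color_ne _ rfl rfl

theorem exists_getElem_mem_colorNbhd (hl : 2 ≤ L.length) {N : Finset V}
    (hN : IsColorNbhd G c L[0] N) (hcard : 2 ≤ N.card) (hsub : ∀ v ∈ N, v ∈ L) :
    ∃ j, ∃ hj : j < L.length, 2 ≤ j ∧ L[j] ∈ N := by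
  obtain ⟨w, hw, hw1⟩ := Finset.exists_mem_ne hcard L[1]
  obtain ⟨j, hj, rfl⟩ := List.getElem_of_mem (hsub w hw)
  refine ⟨j, hj, ?_, hw⟩
  have hj0 : j ≠ 0 := by rintro rfl; exact (hN.1 _ hw).ne rfl
  have hj1 : j ≠ 1 := by rintro rfl; exact hw1 rfl
  omega

def HasProperCycleOn (G : SimpleGraph V) (c : Sym2 V → C) (L : List V) : Prop :=
  ∃ M : List V, IsProperCycleList G c M ∧ ∀ z ∈ M, z ∈ L

theorem HasProperCycleOn.mono {L' : List V} (h : HasProperCycleOn G c L)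
    (hsub : ∀ z ∈ L, z ∈ L') : HasProperCycleOn G c L' :=
  let ⟨M, hM, hML⟩ := h
  ⟨M, hM, fun z hz => hsub z (hML z hz)⟩

theorem IsProperPathList.hasProperCycleOn_of_mem_colorNbhd (hL : IsProperPathList G c L)
    {N : Finset V} {j : ℕ} (hj : j < L.length) (hj2 : 2 ≤ j) (hN : IsColorNbhd G c L[0] N)
    (h1 : L[1] ∈ N) (hjN : L[j] ∈ N) (hcol : c s(L[j - 1], L[j]) ≠ c s(L[j], L[0])) :
    HasProperCycleOn G c L := by
  refine ⟨_, hL.isProperCycleList_take hj hj2 (hN.1 _ hjN).symm hcol ?_,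
    fun z hz => List.mem_of_mem_take hz⟩
  simpa only [Sym2.eq_swap] using hN.color_ne hjN h1 (hL.getElem_ne hj _ (by omega))

theorem IsProperPathList.take_append_reverse_drop_of_color_eq (hL : IsProperPathList G c L)
    {a : ℕ} (ha : a + 3 ≤ L.length) {Nl : Finset V} (hNl : IsColorNbhd G c L[L.length - 1] Nl)
    (h2 : L[L.length - 2] ∈ Nl) (haN : L[a] ∈ Nl)
    (ha' : c s(L[a + 1], L[a]) = c s(L[a], L[L.length - 1])) :
    IsProperPathList G c (L.take (a + 1) ++ (L.drop (a + 1)).reverse) := by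
  refine hL.take_append_reverse_drop ha (hNl.1 _ haN).symm (fun _ => ?_) ?_
  · rw [← ha']
    simpa only [Sym2.eq_swap, ne_comm] using
      hL.color_ne (i := a - 1) (j := a) (k := a + 1) (by omega) (by omega) (by omega)
  · simpa only [Sym2.eq_swap] using hNl.color_ne haN h2 (hL.getElem_ne _ _ (by omega))

/-- The cycle is `L[0] ⋯ L[a] L[l-1] ⋯ L[b]`: a prefix of the rotation at `L[a]`, closed
by the chord `L[b] L[0]`. -/
theorem IsProperPathList.hasProperCycleOn_of_crossing_of_color_eq
    (hL : IsProperPathList G c L) {a b : ℕ} (hab : a < b) (hb : b < L.length)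
    (ha : a + 3 ≤ L.length) (hb2 : 2 ≤ b) {N1 Nl : Finset V} (hN1 : IsColorNbhd G c L[0] N1)
    (hNl : IsColorNbhd G c L[L.length - 1] Nl) (h1 : L[1] ∈ N1) (h2 : L[L.length - 2] ∈ Nl)
    (haN : L[a] ∈ Nl) (hbN : L[b] ∈ N1)
    (ha' : c s(L[a + 1], L[a]) = c s(L[a], L[L.length - 1]))
    (hb' : c s(L[b - 1], L[b]) = c s(L[b], L[0])) :
    HasProperCycleOn G c L := by
  have hbx : b = L.length - 1 → c s(L[a], L[b]) ≠ c s(L[b], L[0]) := by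
    intro hbl
    rw [← hb', getElem_congr_idx (show b = L.length - 1 from hbl),
      getElem_congr_idx (show b - 1 = L.length - 2 by omega), Sym2.eq_swap (a := L[a]),
      Sym2.eq_swap (a := L[L.length - 2])]
    exact hNl.color_ne haN h2 (hL.getElem_ne _ _ (by omega))
  have hj2 : 2 ≤ a + L.length - b := by
    by_contra hj
    obtain rfl : a = 0 := by omega
    exact hbx (by omega) (Sym2.eq_swap ▸ rfl)
  have hRb := getElem_take_append_reverse_drop_of_le (L := L) (k := a + 1)
    (i := a + L.length - b) (j := b) (by simp; omega) (by omega) (by omega)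
  have hR0 := getElem_take_append_reverse_drop_of_lt (L := L) (k := a + 1) (i := 0)
    (by simp; omega) (by omega)
  refine HasProperCycleOn.mono ⟨_, (hL.take_append_reverse_drop_of_color_eq ha hNl h2 haN ha')
    |>.isProperCycleList_take (j := a + L.length - b) (by simp; omega) hj2 ?_ ?_ ?_,
    fun z hz => List.mem_of_mem_take hz⟩ ?_
  · rw [hRb, hR0]; exact (hN1.1 _ hbN).symm
  · rw [hRb, hR0]
    rcases (by omega : b = L.length - 1 ∨ b + 2 ≤ L.length) with hbl | hbl
    · rw [getElem_take_append_reverse_drop_of_lt _ (by omega)]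
      convert hbx hbl using 5; omega
    · rw [getElem_take_append_reverse_drop_of_le (j := b + 1) _ (by omega) (by omega), ← hb',
        Sym2.eq_swap (a := L[b - 1])]
      exact color_ne_comm <|
        hL.color_ne (i := b - 1) (j := b) (k := b + 1) (by omega) (by omega) (by omega)
  · rw [hRb, hR0]
    have hx1 := hN1.color_ne hbN h1 (hL.getElem_ne _ _ (by omega))
    rcases Nat.eq_zero_or_pos a with rfl | ha0
    · rw [getElem_take_append_reverse_drop_of_le (j := L.length - 1) _ le_rfl (by omega), ← ha',
        Sym2.eq_swap (a := L[b]), Sym2.eq_swap (a := L[0 + 1])]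
      exact hx1
    · rw [getElem_take_append_reverse_drop_of_lt _ (by omega), Sym2.eq_swap (a := L[b])]
      exact hx1
  · intro z hz
    rcases List.mem_append.mp hz with hz | hz
    · exact List.mem_of_mem_take hz
    · exact List.mem_of_mem_drop (List.mem_reverse.mp hz)

theorem IsProperPathList.hasProperCycleOn_of_crossing (hL : IsProperPathList G c L)
    {a b : ℕ} (hab : a < b) (hb : b < L.length) (ha : a + 3 ≤ L.length) (hb2 : 2 ≤ b)
    {N1 Nl : Finset V} (hN1 : IsColorNbhd G c L[0] N1)
    (hNl : IsColorNbhd G c L[L.length - 1] Nl) (h1 : L[1] ∈ N1) (h2 : L[L.length - 2] ∈ Nl)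
    (haN : L[a] ∈ Nl) (hbN : L[b] ∈ N1) :
    HasProperCycleOn G c L := by
  by_cases hb' : c s(L[b - 1], L[b]) = c s(L[b], L[0])
  swap
  · exact hL.hasProperCycleOn_of_mem_colorNbhd hb hb2 hN1 h1 hbN hb'
  by_cases ha' : c s(L[a + 1], L[a]) = c s(L[a], L[L.length - 1])
  · exact hL.hasProperCycleOn_of_crossing_of_color_eq hab hb ha hb2 hN1 hNl h1 h2 haN hbN ha' hb'
  refine (hL.reverse.hasProperCycleOn_of_mem_colorNbhd (N := Nl) (j := L.length - 1 - a)
    (by simp; omega) (by omega) ?_ ?_ ?_ ?_).mono fun z => List.mem_reverse.mp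
  · rwa [getElem_reverse_of_add (i := 0) (j := L.length - 1) _ (by omega)]
  · rwa [getElem_reverse_of_add (i := 1) (j := L.length - 2) _ (by omega)]
  · rwa [getElem_reverse_of_add (i := L.length - 1 - a) (j := a) _ (by omega)]
  · rwa [getElem_reverse_of_add (i := L.length - 1 - a - 1) (j := a + 1) _ (by omega),
      getElem_reverse_of_add (i := L.length - 1 - a) (j := a) _ (by omega),
      getElem_reverse_of_add (i := 0) (j := L.length - 1) _ (by omega)]

end ProperColouring

theorem exists_crossing_away_from_ends {P Q : ℕ → Prop} {l i j p q : ℕ} (hij : i < j)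
    (hj : j < l) (hPi : P i) (hQj : Q j) (hp : p + 3 ≤ l) (hPp : P p) (hq2 : 2 ≤ q) (hq : q < l)
    (hQq : Q q) :
    ∃ a b, a < b ∧ b < l ∧ a + 3 ≤ l ∧ 2 ≤ b ∧ P a ∧ Q b := by
  by_cases hj2 : j < 2
  · obtain rfl : i = 0 := by omega
    exact ⟨0, q, by omega, hq, by omega, hq2, hPi, hQq⟩
  by_cases hi : i + 3 ≤ l
  · exact ⟨i, j, hij, hj, hi, by omega, hPi, hQj⟩
  · obtain rfl : j = l - 1 := by omega
    exact ⟨p, l - 1, by omega, by omega, hp, by omega, hPp, hQj⟩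

theorem crossing_gives_cycle_general {V C : Type*}
    (G : SimpleGraph V) (c : Sym2 V → C) (h2 : 2 ≤ minColorDegree G c)
    (L : List V) (hL : IsProperPathList G c L) (hmax : MaximalPathList G c L)
    (x y : V) (hx : L.head? = some x) (hy : L.getLast? = some y)
    (N1 Nl : Finset V) (hN1 : IsColorNbhd G c x N1) (hNl : IsColorNbhd G c y Nl)
    (hsnd : ∀ z, L[1]? = some z → z ∈ N1)
    (hsnd' : ∀ z, L.reverse[1]? = some z → z ∈ Nl)
    (hcross : ∃ i j : Fin L.length, i < j ∧ L.get i ∈ Nl ∧ L.get j ∈ N1) :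
    ∃ M : List V, IsProperCycleList G c M ∧ ∀ z ∈ M, z ∈ L := by
  obtain ⟨⟨i, hi⟩, ⟨j, hj⟩, hij, hiN, hjN⟩ := hcross
  have hl : 2 ≤ L.length := by simp only [Fin.mk_lt_mk] at hij; omega
  rw [List.head?_eq_getElem?, List.getElem?_eq_getElem (by omega), Option.some_inj] at hx
  rw [List.getLast?_eq_getElem?, List.getElem?_eq_getElem (by omega), Option.some_inj] at hy
  subst hx hy
  have h1 : L[1] ∈ N1 := hsnd _ (List.getElem?_eq_getElem _)
  have hl' : 2 ≤ L.reverse.length := by simpa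
  have hNl' : IsColorNbhd G c L.reverse[0] Nl := by
    rwa [getElem_reverse_of_add (j := L.length - 1) _ (by omega)]
  have h2' : L.reverse[1] ∈ Nl := hsnd' _ (List.getElem?_eq_getElem _)
  obtain ⟨q, hq, hq2, hqN⟩ := exists_getElem_mem_colorNbhd hl hN1 (hN1.two_le_card h2)
    fun v => hL.mem_of_mem_colorNbhd hl hN1 h1 fun w hw => hmax L .refl ⟨w, Or.inr hw⟩
  obtain ⟨p, hp, hp2, hpN⟩ := exists_getElem_mem_colorNbhd hl' hNl' (hNl'.two_le_card h2)
    fun v => hL.reverse.mem_of_mem_colorNbhd hl' hNl' h2' fun w hw =>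
      hmax L .refl ⟨w, Or.inl (by simpa using hw.reverse)⟩
  simp only [List.length_reverse] at hp
  rw [getElem_reverse_of_add (j := L.length - 1 - p) _ (by omega)] at hpN
  obtain ⟨a, b, hab, hb, ha, hb2, ⟨_, haN⟩, ⟨_, hbN⟩⟩ :=
    exists_crossing_away_from_ends (P := fun k => ∃ h : k < L.length, L[k] ∈ Nl)
      (Q := fun k => ∃ h : k < L.length, L[k] ∈ N1) hij hj ⟨hi, hiN⟩ ⟨hj, hjN⟩
      (p := L.length - 1 - p) (by omega) ⟨by omega, hpN⟩ hq2 hq ⟨hq, hqN⟩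
  exact hL.hasProperCycleOn_of_crossing hab hb ha hb2 hN1 hNl h1
    (by rwa [getElem_reverse_of_add (j := L.length - 2) _ (by omega)] at h2') haN hbN

/-- If a maximal properly coloured path `L` (with endpoints `x` and `y`) in a graph of
minimum colour degree at least `2` has a crossing with respect to some choice of colour
neighbourhoods of its endpoints, then the induced subgraph on `V(L)` contains a
properly coloured cycle. -/
theorem crossing_gives_cycle {V C : Type*} [Fintype V]
    (G : SimpleGraph V) (c : Sym2 V → C) (h2 : 2 ≤ minColorDegree G c)
    (L : List V) (hL : IsProperPathList G c L) (hmax : MaximalPathList G c L)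
    (x y : V) (hx : L.head? = some x) (hy : L.getLast? = some y)
    (N1 Nl : Finset V) (hN1 : IsColorNbhd G c x N1) (hNl : IsColorNbhd G c y Nl)
    (hsnd : ∀ z, L[1]? = some z → z ∈ N1)
    (hsnd' : ∀ z, L.reverse[1]? = some z → z ∈ Nl)
    (hcross : ∃ i j : Fin L.length, i < j ∧ L.get i ∈ Nl ∧ L.get j ∈ N1) :
    ∃ M : List V, IsProperCycleList G c M ∧ ∀ z ∈ M, z ∈ L :=
  crossing_gives_cycle_general G c h2 L hL hmax x y hx hy N1 Nl hN1 hNl hsnd hsnd' hcross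
end
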